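/- (Lemma 1, exact form.) Let L be a positive natural number, q₁, q₂ > 0 reals, and T an invertible linear map on ℝ^L (e.g. a linear equivalence (Fin L → ℝ) ≃ₗ[ℝ] (Fin L → ℝ)). Let 𝒬₁, 𝒬₂ denote the quantize-dequantize maps with steps q₁, q₂ applied entrywise to vectors. Then for all I, J ∈ ℝ^L: 𝒬₁( T⁻¹ 𝒬₂( T (𝒬₁(I) − J) ) + J ) − I = 𝒬₁( T⁻¹ 𝒬₂( T (𝒬₁(I − 𝒬₁(J)) − (J − 𝒬₁(J))) ) + (J − 𝒬₁(J)) ) − (I − 𝒬₁(J)). In words: the reconstruction error of the predictive video-coding pipeline applied to the frame I with predictor J equals the reconstruction error of the same pipeline applied to the residue I − 𝒬₁(J) with predictor J − 𝒬₁(J). -/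

import Mathlib

/-!
Quantization with step `q` commutes with translation by points of the lattice `qℤ`, and
`𝒬₁(J)` is such a point. Subtracting it from the frame and from the predictor therefore
leaves the prediction residue `𝒬₁(I) − J` unchanged and shifts the reconstruction by exactly
`𝒬₁(J)`, which cancels in the error.
-/

/-- The quantize-dequantize map `𝒬_q(x) = q · round(x/q)`. -/
noncomputable def Qd (q x : ℝ) : ℝ := q * (round (x / q) : ℝ)

/-- Entrywise quantize-dequantize map on vectors in `ℝ^L`. -/
noncomputable def Qv (q : ℝ) {L : ℕ} (v : Fin L → ℝ) : Fin L → ℝ :=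
  fun i => Qd q (v i)

lemma Qd_sub_Qd (q x y : ℝ) : Qd q (x - Qd q y) = Qd q x - Qd q y := by
  rcases eq_or_ne q 0 with rfl | hq
  · simp [Qd]
  · have hdiv : (x - Qd q y) / q = x / q - round (y / q) := by
      rw [Qd]; field_simp
    rw [Qd, hdiv, round_sub_intCast, Qd, Qd]
    push_cast
    ring

lemma Qv_sub_Qv {L : ℕ} (q : ℝ) (x y : Fin L → ℝ) : Qv q (x - Qv q y) = Qv q x - Qv q y :=
  funext fun i => Qd_sub_Qd q (x i) (y i)

theorem frame_error_eq_residue_error_general (L : ℕ)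
    (q₁ q₂ : ℝ)
    (T : (Fin L → ℝ) ≃ₗ[ℝ] (Fin L → ℝ)) (I J : Fin L → ℝ) :
    Qv q₁ (T.symm (Qv q₂ (T (Qv q₁ I - J))) + J) - I =
      Qv q₁ (T.symm (Qv q₂ (T (Qv q₁ (I - Qv q₁ J) - (J - Qv q₁ J)))) + (J - Qv q₁ J))
        - (I - Qv q₁ J) := by
  have same_residue : Qv q₁ (I - Qv q₁ J) - (J - Qv q₁ J) = Qv q₁ I - J := by
    rw [Qv_sub_Qv]; abel
  rw [same_residue, ← add_sub_assoc, Qv_sub_Qv]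
  abel

/-- Lemma 1 (exact form): the reconstruction error of the predictive video-coding
pipeline applied to the frame `I` with predictor `J` equals the reconstruction error
of the same pipeline applied to the residue `I − 𝒬₁(J)` with predictor `J − 𝒬₁(J)`. -/
theorem frame_error_eq_residue_error (L : ℕ) (hL : 0 < L)
    (q₁ q₂ : ℝ) (hq₁ : 0 < q₁) (hq₂ : 0 < q₂)
    (T : (Fin L → ℝ) ≃ₗ[ℝ] (Fin L → ℝ)) (I J : Fin L → ℝ) :
    Qv q₁ (T.symm (Qv q₂ (T (Qv q₁ I - J))) + J) - I =
      Qv q₁ (T.symm (Qv q₂ (T (Qv q₁ (I - Qv q₁ J) - (J - Qv q₁ J)))) + (J - Qv q₁ J))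
        - (I - Qv q₁ J) :=
  frame_error_eq_residue_error_general L q₁ q₂ T I J
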